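/- The affine variety V(2x₁z₁+x₂z₃+x₃z₂, 2y₁z₁+y₂z₃+y₃z₂, z₁²+z₂z₃−1) ⊂ 𝔸⁹ (coordinates x₁,x₂,x₃,y₁,y₂,y₃,z₁,z₂,z₃ over ℂ) is smooth: at every point of this variety the 3×9 Jacobian matrix of the three defining equations has rank 3. -/
import Mathlib


open MvPolynomial

/-- The three defining equations of the scheme of trace-preserving 2-dimensional
representations of the conifold algebra, in variables
`x₁,x₂,x₃,y₁,y₂,y₃,z₁,z₂,z₃ = 0,…,8`. -/
noncomputable def conifoldRepEqs : Fin 3 → MvPolynomial (Fin 9) ℂ :=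
  ![2 * X 0 * X 6 + X 1 * X 8 + X 2 * X 7,
    2 * X 3 * X 6 + X 4 * X 8 + X 5 * X 7,
    X 6 ^ 2 + X 7 * X 8 - 1]

private lemma pd2' (j : Fin 9) : pderiv j (2 : MvPolynomial (Fin 9) ℂ) = 0 := by
  rw [show (2 : MvPolynomial (Fin 9) ℂ) = C 2 from (map_ofNat C 2).symm, pderiv_C]

private lemma rank_submatrix_col_le' (M : Matrix (Fin 3) (Fin 9) ℂ) (c : Fin 3 → Fin 9) :
    (M.submatrix id c).rank ≤ M.rank := by
  rw [Matrix.rank, Matrix.rank]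
  apply Submodule.finrank_mono
  rintro x ⟨v, rfl⟩
  refine ⟨fun k => ∑ j, if c j = k then v j else 0, ?_⟩
  ext i
  simp only [Matrix.mulVecLin_apply, Matrix.mulVec, dotProduct,
    Matrix.submatrix_apply, id, Finset.mul_sum, mul_ite, mul_zero]
  rw [Finset.sum_comm]
  simp [Finset.sum_ite_eq]

private lemma rank_ge_of_submatrix' (M : Matrix (Fin 3) (Fin 9) ℂ) (c : Fin 3 → Fin 9)
    (hdet : (M.submatrix id c).det ≠ 0) : 3 ≤ M.rank := by
  have h1 : (M.submatrix id c).rank = 3 := by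
    rw [Matrix.rank_of_isUnit]
    · simp
    · exact (Matrix.isUnit_iff_isUnit_det _).2 hdet.isUnit
  calc (3:ℕ) = (M.submatrix id c).rank := h1.symm
    _ ≤ M.rank := rank_submatrix_col_le' M c

/-- The affine variety
`V(2x₁z₁+x₂z₃+x₃z₂, 2y₁z₁+y₂z₃+y₃z₂, z₁²+z₂z₃-1) ⊂ 𝔸⁹` is smooth: at every
point of the variety the `3 × 9` Jacobian matrix of the defining equations has
rank `3`. -/
theorem trep2_conifold_smooth (p : Fin 9 → ℂ)
    (h : ∀ i : Fin 3, eval p (conifoldRepEqs i) = 0) :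
    (Matrix.of fun (i : Fin 3) (j : Fin 9) =>
      eval p (pderiv j (conifoldRepEqs i))).rank = 3 := by
  set M : Matrix (Fin 3) (Fin 9) ℂ := Matrix.of fun (i : Fin 3) (j : Fin 9) =>
      eval p (pderiv j (conifoldRepEqs i)) with hM
  have h2 : p 6 ^ 2 + p 7 * p 8 = 1 := by
    have := h 2
    simp [conifoldRepEqs] at this
    linear_combination this
  refine le_antisymm (Matrix.rank_le_card_height M |>.trans (by simp)) ?_
  by_cases h6 : p 6 ≠ 0
  · refine rank_ge_of_submatrix' M ![0, 3, 6] ?_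
    have : (M.submatrix id ![0, 3, 6]).det = (2 * p 6)^3 := by
      simp [Matrix.det_fin_three, hM, conifoldRepEqs, pderiv_mul, pderiv_X, pd2', pderiv_pow]
      ring
    rw [this]
    exact pow_ne_zero _ (mul_ne_zero two_ne_zero h6)
  by_cases h8 : p 8 ≠ 0
  · refine rank_ge_of_submatrix' M ![1, 4, 7] ?_
    have : (M.submatrix id ![1, 4, 7]).det = (p 8)^3 := by
      simp [Matrix.det_fin_three, hM, conifoldRepEqs, pderiv_mul, pderiv_X, pd2', pderiv_pow]
      ring
    rw [this]
    exact pow_ne_zero _ h8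
  by_cases h7 : p 7 ≠ 0
  · refine rank_ge_of_submatrix' M ![2, 5, 8] ?_
    have : (M.submatrix id ![2, 5, 8]).det = (p 7)^3 := by
      simp [Matrix.det_fin_three, hM, conifoldRepEqs, pderiv_mul, pderiv_X, pd2', pderiv_pow]
      ring
    rw [this]
    exact pow_ne_zero _ h7
  push_neg at h6 h7 h8
  rw [h6, h7] at h2
  simp at h2
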